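/- (Demonet, Proposition A.2.) Let C be a maximal chain of torsion classes of mod A. Then every T ∈ C equals the smallest torsion class containing the union of all U ∈ C that are completely join irreducible in C and contained in T. Moreover, T also equals the smallest torsion class containing all bricks B such that B ∈ U^⊥ ∩ V for some pair U, V ∈ C with V ⊆ T and U ⋖ V a covering relation in C (U ⊊ V with no element of C strictly between). -/

import Mathlib

universe u

/-- A bundled finite(-dimensional) module over a ring `R`.  When `R` is a
finite-dimensional algebra over a field, these are exactly the objects of
`mod R`. -/
structure FDMod (R : Type u) [Ring R] : Type (u + 1) where
  carrier : Type u
  [isAddCommGroup : AddCommGroup carrier]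
  [isModule : Module R carrier]
  [isFinite : Module.Finite R carrier]

attribute [instance] FDMod.isAddCommGroup FDMod.isModule FDMod.isFinite

variable (R : Type u) [Ring R]

/-- A torsion class of the full subcategory of `mod R` determined by `P`:
a subclass of `P` containing the zero modules of `P` and closed under
isomorphisms, quotient modules (i.e. images of surjections) and extensions
(within `P`). -/
structure IsTorsionClassIn (P T : Set (FDMod R)) : Prop where
  subset : T ⊆ P
  zero_mem : ∀ Z : FDMod R, Z ∈ P → (∀ z : Z.carrier, z = 0) → Z ∈ T
  iso_closed : ∀ M N : FDMod R, M ∈ T → N ∈ P →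
    Nonempty (M.carrier ≃ₗ[R] N.carrier) → N ∈ T
  quot_closed : ∀ M N : FDMod R, M ∈ T → N ∈ P →
    (∃ f : M.carrier →ₗ[R] N.carrier, Function.Surjective f) → N ∈ T
  ext_closed : ∀ L M N : FDMod R, L ∈ T → N ∈ T → M ∈ P →
    (∃ (f : L.carrier →ₗ[R] M.carrier) (g : M.carrier →ₗ[R] N.carrier),
       Function.Injective f ∧ Function.Surjective g ∧
       LinearMap.range f = LinearMap.ker g) → M ∈ T

/-- A torsion class of `mod R`. -/
def IsTorsionClass (T : Set (FDMod R)) : Prop :=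
  IsTorsionClassIn R Set.univ T

/-- The smallest torsion class of `mod R` containing a given class `X` of
modules (the intersection of all torsion classes containing `X`). -/
def tclosure (X : Set (FDMod R)) : Set (FDMod R) :=
  {M | ∀ T : Set (FDMod R), IsTorsionClass R T → X ⊆ T → M ∈ T}

/-- A brick: a module whose endomorphism algebra is a division algebra. -/
def IsBrick (M : FDMod R) : Prop :=
  Nontrivial M.carrier ∧ ∀ f : Module.End R M.carrier, f ≠ 0 → IsUnit f

variable {R} in
/-- An element `U` of a chain `C` of torsion classes is completely join
irreducible in `C` if `U` is not the smallest torsion class containing the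
union of the elements of `C` strictly contained in `U`. -/
def IsCJIinChain (C : Set (Set (FDMod R))) (U : Set (FDMod R)) : Prop :=
  U ≠ tclosure R (⋃₀ {V | V ∈ C ∧ V ⊂ U})


/- ######################## Section A: torsion basics ######################## -/

variable {R}

theorem tclosure_isTorsionClass (X : Set (FDMod R)) : IsTorsionClass R (tclosure R X) where
  subset := Set.subset_univ _
  zero_mem := fun Z _ hz T hT hXT => hT.zero_mem Z trivial hz
  iso_closed := fun M N hM _ hiso T hT hXT => hT.iso_closed M N (hM T hT hXT) trivial hiso
  quot_closed := fun M N hM _ hsur T hT hXT => hT.quot_closed M N (hM T hT hXT) trivial hsur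
  ext_closed := fun L M N hL hN _ hext T hT hXT =>
    hT.ext_closed L M N (hL T hT hXT) (hN T hT hXT) trivial hext

theorem subset_tclosure (X : Set (FDMod R)) : X ⊆ tclosure R X :=
  fun M hM T _ hXT => hXT hM

theorem tclosure_min {X T : Set (FDMod R)} (hT : IsTorsionClass R T) (h : X ⊆ T) :
    tclosure R X ⊆ T := fun M hM => hM T hT h

/-- the class of zero modules -/
def zclass (R : Type u) [Ring R] : Set (FDMod R) := {M | ∀ z : M.carrier, z = 0}

theorem zclass_isTorsionClass : IsTorsionClass R (zclass R) where
  subset := Set.subset_univ _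
  zero_mem := fun Z _ hz => hz
  iso_closed := by
    rintro M N hM _ ⟨e⟩ n
    have : e.symm n = 0 := hM _
    have h2 := congrArg e this
    simpa using h2
  quot_closed := by
    rintro M N hM _ ⟨f, hf⟩ n
    obtain ⟨m, rfl⟩ := hf n
    rw [hM m, map_zero]
  ext_closed := by
    rintro L M N hL hN _ ⟨f, g, hfi, hgs, he⟩ m
    have hm : m ∈ LinearMap.ker g := by
      simp [LinearMap.mem_ker, hN (g m)]
    rw [← he] at hm
    obtain ⟨l, rfl⟩ := hm
    rw [hL l, map_zero]

theorem zclass_subset {T : Set (FDMod R)} (hT : IsTorsionClass R T) : zclass R ⊆ T :=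
  fun M hM => hT.zero_mem M trivial hM

theorem sInter_isTorsionClass {S : Set (Set (FDMod R))} (hS : S.Nonempty)
    (h : ∀ T ∈ S, IsTorsionClass R T) : IsTorsionClass R (⋂₀ S) where
  subset := Set.subset_univ _
  zero_mem := fun Z _ hz T hT => (h T hT).zero_mem Z trivial hz
  iso_closed := fun M N hM _ hiso T hT => (h T hT).iso_closed M N (hM T hT) trivial hiso
  quot_closed := fun M N hM _ hs T hT => (h T hT).quot_closed M N (hM T hT) trivial hs
  ext_closed := fun L M N hL hN _ he T hT =>
    (h T hT).ext_closed L M N (hL T hT) (hN T hT) trivial he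

theorem sUnion_chain_isTorsionClass {S : Set (Set (FDMod R))} (hS : S.Nonempty)
    (hc : IsChain (· ⊆ ·) S)
    (h : ∀ T ∈ S, IsTorsionClass R T) : IsTorsionClass R (⋃₀ S) where
  subset := Set.subset_univ _
  zero_mem := by
    obtain ⟨T, hT⟩ := hS
    exact fun Z _ hz => ⟨T, hT, (h T hT).zero_mem Z trivial hz⟩
  iso_closed := by
    rintro M N ⟨T, hT, hM⟩ _ hiso
    exact ⟨T, hT, (h T hT).iso_closed M N hM trivial hiso⟩
  quot_closed := by
    rintro M N ⟨T, hT, hM⟩ _ hs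
    exact ⟨T, hT, (h T hT).quot_closed M N hM trivial hs⟩
  ext_closed := by
    rintro L M N ⟨T1, hT1, hL⟩ ⟨T2, hT2, hN⟩ _ he
    rcases hc.total hT1 hT2 with h12 | h21
    · exact ⟨T2, hT2, (h T2 hT2).ext_closed L M N (h12 hL) hN trivial he⟩
    · exact ⟨T1, hT1, (h T1 hT1).ext_closed L M N hL (h21 hN) trivial he⟩
/- ################# Section B: chain lemmas ################# -/
section Chain

variable {C : Set (Set (FDMod R))}
  (hC : ∀ T ∈ C, IsTorsionClass R T) (hchain : IsChain (· ⊆ ·) C)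
  (hmax : ∀ C' : Set (Set (FDMod R)),
      (∀ T ∈ C', IsTorsionClass R T) → IsChain (· ⊆ ·) C' → C ⊆ C' → C' = C)

include hC hchain hmax in
/-- any torsion class comparable with everything in `C` belongs to `C`. -/
theorem mem_of_comparable {E : Set (FDMod R)} (hE : IsTorsionClass R E)
    (hcomp : ∀ W ∈ C, W ⊆ E ∨ E ⊆ W) : E ∈ C := by
  have hCE : C ∪ {E} = C := by
    apply hmax
    · rintro T (hT | rfl)
      · exact hC T hT
      · exact hE
    · intro x hx y hy hxy
      rcases hx with hx | rfl
      · rcases hy with hy | rfl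
        · exact hchain hx hy hxy
        · rcases hcomp x hx with h | h
          · exact Or.inl h
          · exact Or.inr h
      · rcases hy with hy | rfl
        · rcases hcomp y hy with h | h
          · exact Or.inr h
          · exact Or.inl h
        · exact absurd rfl hxy
    · exact Set.subset_union_left
  have : E ∈ C ∪ {E} := Or.inr rfl
  rwa [hCE] at this

include hC hchain hmax in
theorem tclosure_sUnion_mem {D : Set (Set (FDMod R))} (hD : D ⊆ C) :
    tclosure R (⋃₀ D) ∈ C := by
  apply mem_of_comparable hC hchain hmax (tclosure_isTorsionClass _)
  intro W hW
  by_cases h : ∀ X ∈ D, X ⊆ W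
  · exact Or.inr (tclosure_min (hC W hW) (Set.sUnion_subset h))
  · push_neg at h
    obtain ⟨X, hXD, hXW⟩ := h
    rcases hchain.total (hD hXD) hW with h' | h'
    · exact absurd h' hXW
    · exact Or.inl (h'.trans ((Set.subset_sUnion_of_mem hXD).trans (subset_tclosure _)))

include hC hchain hmax in
theorem sUnion_mem {D : Set (Set (FDMod R))} (hD : D ⊆ C) (hne : D.Nonempty) :
    ⋃₀ D ∈ C := by
  apply mem_of_comparable hC hchain hmax
    (sUnion_chain_isTorsionClass hne (hchain.mono hD) (fun T hT => hC T (hD hT)))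
  intro W hW
  by_cases h : ∀ X ∈ D, X ⊆ W
  · exact Or.inr (Set.sUnion_subset h)
  · push_neg at h
    obtain ⟨X, hXD, hXW⟩ := h
    rcases hchain.total (hD hXD) hW with h' | h'
    · exact absurd h' hXW
    · exact Or.inl (h'.trans (Set.subset_sUnion_of_mem hXD))

include hC hchain hmax in
theorem sInter_mem {D : Set (Set (FDMod R))} (hD : D ⊆ C) (hne : D.Nonempty) :
    ⋂₀ D ∈ C := by
  apply mem_of_comparable hC hchain hmax
    (sInter_isTorsionClass hne (fun T hT => hC T (hD hT)))
  intro W hW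
  by_cases h : ∀ X ∈ D, W ⊆ X
  · exact Or.inl (Set.subset_sInter h)
  · push_neg at h
    obtain ⟨X, hXD, hXW⟩ := h
    rcases hchain.total (hD hXD) hW with h' | h'
    · exact Or.inr ((Set.sInter_subset_of_mem hXD).trans h')
    · exact absurd h' hXW

include hC hchain hmax in
theorem zclass_mem : zclass R ∈ C :=
  mem_of_comparable hC hchain hmax zclass_isTorsionClass
    (fun W hW => Or.inr (zclass_subset (hC W hW)))

include hC hchain hmax in
/-- The splitting of the chain at a module `B`. -/
theorem chain_split {B : FDMod R} {X₀ X₁ : Set (FDMod R)}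
    (hX₀ : X₀ ∈ C) (hB₀ : B ∉ X₀) (hX₁ : X₁ ∈ C) (hB₁ : B ∈ X₁) :
    ∃ Y Y', Y ∈ C ∧ Y' ∈ C ∧ Y ⊆ Y' ∧ B ∉ Y ∧ B ∈ Y' ∧ X₀ ⊆ Y ∧ Y' ⊆ X₁ ∧
      (∀ V ∈ C, V ⊂ Y' → V ⊆ Y) ∧ (∀ W ∈ C, ¬ (Y ⊂ W ∧ W ⊂ Y')) := by
  classical
  set D : Set (Set (FDMod R)) := {X | X ∈ C ∧ B ∉ X} with hD
  set D' : Set (Set (FDMod R)) := {X | X ∈ C ∧ B ∈ X} with hD'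
  have hDC : D ⊆ C := fun X hX => hX.1
  have hD'C : D' ⊆ C := fun X hX => hX.1
  have hDne : D.Nonempty := ⟨X₀, hX₀, hB₀⟩
  have hD'ne : D'.Nonempty := ⟨X₁, hX₁, hB₁⟩
  refine ⟨⋃₀ D, ⋂₀ D', sUnion_mem hC hchain hmax hDC hDne,
    sInter_mem hC hchain hmax hD'C hD'ne, ?_, ?_, ?_, ?_, ?_, ?_, ?_⟩
  · -- Y ⊆ Y'
    intro x hx
    obtain ⟨X, hX, hxX⟩ := hx
    intro X' hX'
    rcases hchain.total (hDC hX) (hD'C hX') with h | h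
    · exact h hxX
    · exact absurd (h hX'.2) hX.2
  · -- B ∉ Y
    rintro ⟨X, hX, hBX⟩
    exact hX.2 hBX
  · -- B ∈ Y'
    exact fun X hX => hX.2
  · exact Set.subset_sUnion_of_mem ⟨hX₀, hB₀⟩
  · exact Set.sInter_subset_of_mem ⟨hX₁, hB₁⟩
  · -- V ⊂ Y' → V ⊆ Y
    intro V hV hVY'
    by_cases hBV : B ∈ V
    · exact absurd (Set.sInter_subset_of_mem (show V ∈ D' from ⟨hV, hBV⟩)) hVY'.not_subset
    · exact Set.subset_sUnion_of_mem ⟨hV, hBV⟩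
  · -- covering
    rintro W hW ⟨hYW, hWY'⟩
    by_cases hBW : B ∈ W
    · exact hWY'.not_subset (Set.sInter_subset_of_mem ⟨hW, hBW⟩)
    · exact hYW.not_subset (Set.subset_sUnion_of_mem ⟨hW, hBW⟩)

include hC hchain hmax in
/-- Between a covering pair of the chain there is nothing; the top is generated
by the bottom together with any new module. -/
theorem top_eq_tclosure_insert {Y Y' : Set (FDMod R)} (hY : Y ∈ C) (hY' : Y' ∈ C)
    (hYY' : Y ⊆ Y') (hcov : ∀ W ∈ C, ¬ (Y ⊂ W ∧ W ⊂ Y')) {B : FDMod R}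
    (hBY : B ∉ Y) (hBY' : B ∈ Y') :
    Y' = tclosure R (insert B Y) := by
  set E := tclosure R (insert B Y) with hE
  have hEY' : E ⊆ Y' := tclosure_min (hC Y' hY') (Set.insert_subset hBY' hYY')
  have hYE : Y ⊆ E := (Set.subset_insert _ _).trans (subset_tclosure _)
  have hBE : B ∈ E := subset_tclosure _ (Set.mem_insert _ _)
  have hEC : E ∈ C := by
    apply mem_of_comparable hC hchain hmax (tclosure_isTorsionClass _)
    intro W hW
    rcases hchain.total hW hY with h | h
    · exact Or.inl (h.trans hYE)
    · rcases hchain.total hW hY' with h' | h'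
      · by_cases hWY : W = Y
        · exact Or.inl (hWY.le.trans hYE)
        · by_cases hWY' : W = Y'
          · exact Or.inr (hEY'.trans hWY'.ge)
          · exact absurd ⟨ssubset_of_subset_of_ne h (Ne.symm hWY),
              ssubset_of_subset_of_ne h' hWY'⟩ (fun hh => hcov W hW hh)
      · exact Or.inr (hEY'.trans h')
  by_contra hne
  have h1 : Y ⊂ E := ssubset_of_subset_of_ne hYE (fun he => hBY (he ▸ hBE))
  have h2 : E ⊂ Y' := ssubset_of_subset_of_ne hEY' (fun he => hne he.symm)
  exact hcov E hEC ⟨h1, h2⟩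

end Chain
/- ################# Section C: part 1 ################# -/
section Part1

variable {C : Set (Set (FDMod R))}
  (hC : ∀ T ∈ C, IsTorsionClass R T) (hchain : IsChain (· ⊆ ·) C)
  (hmax : ∀ C' : Set (Set (FDMod R)),
      (∀ T ∈ C', IsTorsionClass R T) → IsChain (· ⊆ ·) C' → C ⊆ C' → C' = C)

include hC hchain hmax in
theorem part1 {T : Set (FDMod R)} (hT : T ∈ C) :
    T = tclosure R (⋃₀ {U | U ∈ C ∧ IsCJIinChain C U ∧ U ⊆ T}) := by
  set F : Set (Set (FDMod R)) := {U | U ∈ C ∧ IsCJIinChain C U ∧ U ⊆ T} with hF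
  set S1 := tclosure R (⋃₀ F) with hS1
  have hS1T : S1 ⊆ T := tclosure_min (hC T hT) (Set.sUnion_subset fun U hU => hU.2.2)
  refine le_antisymm ?_ hS1T
  by_contra hTS1
  obtain ⟨B, hBT, hBS1⟩ : ∃ B, B ∈ T ∧ B ∉ S1 := by
    by_contra h
    push_neg at h
    exact hTS1 h
  have hS1C : S1 ∈ C := tclosure_sUnion_mem hC hchain hmax (fun U hU => hU.1)
  obtain ⟨Y, Y', hYC, hY'C, hYY', hBY, hBY', hS1Y, hY'T, hbelow, hcov⟩ :=
    chain_split hC hchain hmax hS1C hBS1 hT hBT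
  have hcji : IsCJIinChain C Y' := by
    intro heq
    have hsub : tclosure R (⋃₀ {V | V ∈ C ∧ V ⊂ Y'}) ⊆ Y :=
      tclosure_min (hC Y hYC) (Set.sUnion_subset fun V hV => hbelow V hV.1 hV.2)
    rw [← heq] at hsub
    exact hBY (hsub hBY')
  have hY'F : Y' ∈ F := ⟨hY'C, hcji, hY'T⟩
  exact hBS1 (subset_tclosure _ (Set.subset_sUnion_of_mem hY'F hBY'))

end Part1
/- ################# Section D: dimension machinery ################# -/
section Dim

open Module

variable (K A : Type u) [Field K] [Ring A] [Algebra K A] [FiniteDimensional K A]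

noncomputable def kmod (M : Type u) [AddCommGroup M] [Module Aᵐᵒᵖ M] : Module K M :=
  Module.compHom M (algebraMap K Aᵐᵒᵖ)

theorem kmod_tower (M : Type u) [AddCommGroup M] [Module Aᵐᵒᵖ M] :
    letI := kmod K A M; IsScalarTower K Aᵐᵒᵖ M := by
  letI := kmod K A M
  refine ⟨fun k a m => ?_⟩
  change (k • a) • m = algebraMap K Aᵐᵒᵖ k • (a • m)
  rw [Algebra.smul_def, mul_smul]

theorem kmod_finite (M : Type u) [AddCommGroup M] [Module Aᵐᵒᵖ M] [Module.Finite Aᵐᵒᵖ M] :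
    letI := kmod K A M; Module.Finite K M := by
  letI := kmod K A M
  haveI := kmod_tower K A M
  haveI : Module.Finite K Aᵐᵒᵖ :=
    Module.Finite.equiv (MulOpposite.opLinearEquiv K (M := A))
  exact Module.Finite.trans Aᵐᵒᵖ M

noncomputable def dimK (M : Type u) [AddCommGroup M] [Module Aᵐᵒᵖ M] : ℕ :=
  letI := kmod K A M
  Module.finrank K M

include K in
theorem noetherianRing_op : IsNoetherianRing Aᵐᵒᵖ := by
  haveI : Module.Finite K Aᵐᵒᵖ :=
    Module.Finite.equiv (MulOpposite.opLinearEquiv K (M := A))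
  haveI : IsNoetherian K Aᵐᵒᵖ := by
    exact IsNoetherian.iff_fg.mpr inferInstance
  exact isNoetherian_of_tower K (inferInstance : IsNoetherian K Aᵐᵒᵖ)

variable {K A}
variable {M N L : Type u} [AddCommGroup M] [Module Aᵐᵒᵖ M] [Module.Finite Aᵐᵒᵖ M]
  [AddCommGroup N] [Module Aᵐᵒᵖ N] [Module.Finite Aᵐᵒᵖ N]
  [AddCommGroup L] [Module Aᵐᵒᵖ L] [Module.Finite Aᵐᵒᵖ L]

theorem dimK_le_of_injective (f : M →ₗ[Aᵐᵒᵖ] N) (hf : Function.Injective f) :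
    dimK K A M ≤ dimK K A N := by
  letI := kmod K A M; letI := kmod K A N
  haveI := kmod_tower K A M; haveI := kmod_tower K A N
  haveI := kmod_finite K A M; haveI := kmod_finite K A N
  exact LinearMap.finrank_le_finrank_of_injective
    (f := f.restrictScalars K) hf

theorem dimK_lt_of_surjective (f : M →ₗ[Aᵐᵒᵖ] N) (hs : Function.Surjective f)
    {x : M} (hx : x ≠ 0) (hfx : f x = 0) :
    dimK K A N < dimK K A M := by
  letI := kmod K A M; letI := kmod K A N
  haveI := kmod_tower K A M; haveI := kmod_tower K A N
  haveI := kmod_finite K A M; haveI := kmod_finite K A N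
  set g := f.restrictScalars K with hg
  have h1 : finrank K ↥(LinearMap.range g) + finrank K ↥(LinearMap.ker g) = finrank K M :=
    g.finrank_range_add_finrank_ker
  have h2 : LinearMap.range g = ⊤ := LinearMap.range_eq_top.2 hs
  have h3 : finrank K ↥(LinearMap.range g) = finrank K N := by rw [h2]; exact finrank_top K N
  have h4 : LinearMap.ker g ≠ ⊥ := by
    intro hbot
    have : x ∈ LinearMap.ker g := LinearMap.mem_ker.mpr hfx
    rw [hbot, Submodule.mem_bot] at this
    exact hx this
  have h5 : finrank K ↥(LinearMap.ker g) ≠ 0 := by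
    intro h0
    exact h4 (Submodule.finrank_eq_zero.mp h0)
  show finrank K N < finrank K M
  omega

theorem dimK_exact (f : L →ₗ[Aᵐᵒᵖ] M) (g : M →ₗ[Aᵐᵒᵖ] N) (hf : Function.Injective f)
    (hg : Function.Surjective g) (he : LinearMap.range f = LinearMap.ker g) :
    dimK K A L + dimK K A N = dimK K A M := by
  letI := kmod K A M; letI := kmod K A N; letI := kmod K A L
  haveI := kmod_tower K A M; haveI := kmod_tower K A N; haveI := kmod_tower K A L
  haveI := kmod_finite K A M; haveI := kmod_finite K A N; haveI := kmod_finite K A L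
  set fK := f.restrictScalars K with hfK
  set gK := g.restrictScalars K with hgK
  have h1 : finrank K ↥(LinearMap.range gK) + finrank K ↥(LinearMap.ker gK) = finrank K M :=
    gK.finrank_range_add_finrank_ker
  have h2 : LinearMap.range gK = ⊤ := LinearMap.range_eq_top.2 hg
  have h3 : finrank K ↥(LinearMap.range gK) = finrank K N := by rw [h2]; exact finrank_top K N
  have h4 : LinearMap.ker gK = LinearMap.range fK := by
    ext x
    show x ∈ LinearMap.ker g ↔ x ∈ LinearMap.range f
    rw [he]
  have h5 : finrank K ↥(LinearMap.range fK) = finrank K L :=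
    (LinearEquiv.finrank_eq (LinearEquiv.ofInjective fK hf)).symm
  have h6 : finrank K ↥(LinearMap.ker gK) = finrank K L := by rw [h4]; exact h5
  show finrank K L + finrank K N = finrank K M
  omega

theorem dimK_eq_zero_iff : dimK K A M = 0 ↔ ∀ z : M, z = 0 := by
  letI := kmod K A M
  haveI := kmod_finite K A M
  show finrank K M = 0 ↔ _
  rw [Module.finrank_zero_iff]
  exact ⟨fun h z => Subsingleton.elim z 0, fun h => ⟨fun a b => by rw [h a, h b]⟩⟩

theorem surjective_of_injective_dimK_ge (f : M →ₗ[Aᵐᵒᵖ] N) (hf : Function.Injective f)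
    (hd : dimK K A N ≤ dimK K A M) : Function.Surjective f := by
  letI := kmod K A M; letI := kmod K A N
  haveI := kmod_tower K A M; haveI := kmod_tower K A N
  haveI := kmod_finite K A M; haveI := kmod_finite K A N
  set fK := f.restrictScalars K with hfK
  have h5 : finrank K ↥(LinearMap.range fK) = finrank K M :=
    (LinearEquiv.finrank_eq (LinearEquiv.ofInjective fK hf)).symm
  have h6 : finrank K ↥(LinearMap.range fK) ≤ finrank K N := Submodule.finrank_le _
  have hd' : finrank K N ≤ finrank K M := hd
  have := Submodule.eq_top_of_finrank_eq (by omega : finrank K ↥(LinearMap.range fK) = finrank K N)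
  intro y
  have : y ∈ LinearMap.range fK := by rw [this]; trivial
  exact this

end Dim
/- ################# Section E: FDMod constructions, GenBy, FiltGen ################# -/
section Filt

variable (K A : Type u) [Field K] [Ring A] [Algebra K A] [FiniteDimensional K A]

include K in
theorem finSub (M : FDMod Aᵐᵒᵖ) (N : Submodule Aᵐᵒᵖ M.carrier) :
    Module.Finite Aᵐᵒᵖ ↥N := by
  haveI := noetherianRing_op K A
  exact Module.Finite.iff_fg.mpr (IsNoetherian.noetherian N)

noncomputable def mkSub (M : FDMod Aᵐᵒᵖ) (N : Submodule Aᵐᵒᵖ M.carrier) : FDMod Aᵐᵒᵖ :=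
  { carrier := ↥N, isFinite := finSub K A M N }

def mkQuot (M : FDMod Aᵐᵒᵖ) (N : Submodule Aᵐᵒᵖ M.carrier) : FDMod Aᵐᵒᵖ :=
  { carrier := M.carrier ⧸ N,
    isFinite := Module.Finite.of_surjective N.mkQ (Submodule.mkQ_surjective N) }

def mkProd (M N : FDMod Aᵐᵒᵖ) : FDMod Aᵐᵒᵖ := { carrier := M.carrier × N.carrier }

def mkPi (n : ℕ) (F : Fin n → FDMod Aᵐᵒᵖ) : FDMod Aᵐᵒᵖ :=
  { carrier := (i : Fin n) → (F i).carrier }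

variable {A}

def GenBy (X : Set (FDMod Aᵐᵒᵖ)) (M : FDMod Aᵐᵒᵖ) : Prop :=
  ∃ (n : ℕ) (F : Fin n → FDMod Aᵐᵒᵖ), (∀ i, F i ∈ X) ∧
    ∃ f : ((i : Fin n) → (F i).carrier) →ₗ[Aᵐᵒᵖ] M.carrier, Function.Surjective f

theorem genBy_of_mem {X : Set (FDMod Aᵐᵒᵖ)} {M : FDMod Aᵐᵒᵖ} (h : M ∈ X) : GenBy X M := by
  refine ⟨1, fun _ => M, fun _ => h, LinearMap.proj 0, fun m => ⟨fun _ => m, rfl⟩⟩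

theorem genBy_of_surjective {X : Set (FDMod Aᵐᵒᵖ)} {M N : FDMod Aᵐᵒᵖ} (h : GenBy X M)
    (g : M.carrier →ₗ[Aᵐᵒᵖ] N.carrier) (hg : Function.Surjective g) : GenBy X N := by
  obtain ⟨n, F, hF, f, hf⟩ := h
  exact ⟨n, F, hF, g.comp f, hg.comp hf⟩

variable (A)

inductive FiltGen (X : Set (FDMod Aᵐᵒᵖ)) : FDMod Aᵐᵒᵖ → Prop
  | zero (M : FDMod Aᵐᵒᵖ) (h : ∀ z : M.carrier, z = 0) : FiltGen X M
  | step (M : FDMod Aᵐᵒᵖ) (N : Submodule Aᵐᵒᵖ M.carrier)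
      (hN : FiltGen X (mkSub K A M N)) (hQ : GenBy X (mkQuot A M N)) : FiltGen X M

variable {K A}

theorem filtgen_quot {X : Set (FDMod Aᵐᵒᵖ)} {Q : FDMod Aᵐᵒᵖ} (hQ : FiltGen K A X Q) :
    ∀ (M : FDMod Aᵐᵒᵖ) (f : Q.carrier →ₗ[Aᵐᵒᵖ] M.carrier), Function.Surjective f →
      FiltGen K A X M := by
  induction hQ with
  | zero Q h =>
    intro M f hf
    refine FiltGen.zero M (fun z => ?_)
    obtain ⟨q, rfl⟩ := hf z
    rw [h q, map_zero]
  | step Q N hN hQgen IH =>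
    intro M f hf
    refine FiltGen.step M (N.map f) (IH _ (f.submoduleMap N) (f.submoduleMap_surjective N)) ?_
    refine genBy_of_surjective hQgen (Submodule.mapQ N (N.map f) f
      (fun x hx => Submodule.mem_map_of_mem hx)) ?_
    intro y
    obtain ⟨y', rfl⟩ := Submodule.mkQ_surjective _ y
    obtain ⟨x, rfl⟩ := hf y'
    exact ⟨Submodule.Quotient.mk x, rfl⟩

theorem filtgen_iso {X : Set (FDMod Aᵐᵒᵖ)} {M N : FDMod Aᵐᵒᵖ} (hM : FiltGen K A X M)
    (e : M.carrier ≃ₗ[Aᵐᵒᵖ] N.carrier) : FiltGen K A X N :=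
  filtgen_quot hM N e.toLinearMap e.surjective

theorem filtgen_of_mem {X : Set (FDMod Aᵐᵒᵖ)} {M : FDMod Aᵐᵒᵖ} (h : M ∈ X) :
    FiltGen K A X M := by
  refine FiltGen.step M ⊥ (FiltGen.zero _ (fun z => ?_)) ?_
  · exact Subtype.ext ((Submodule.mem_bot _).mp z.2)
  · exact genBy_of_surjective (genBy_of_mem h) (Submodule.mkQ ⊥) (Submodule.mkQ_surjective ⊥)

theorem filtgen_of_quot {X : Set (FDMod Aᵐᵒᵖ)} {Q : FDMod Aᵐᵒᵖ} (hQ : FiltGen K A X Q) :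
    ∀ (M : FDMod Aᵐᵒᵖ) (N : Submodule Aᵐᵒᵖ M.carrier)
      (_ : Q.carrier ≃ₗ[Aᵐᵒᵖ] (M.carrier ⧸ N)), FiltGen K A X (mkSub K A M N) →
      FiltGen K A X M := by
  induction hQ with
  | zero Q h =>
    intro M N e hN
    have htop : N = ⊤ := by
      rw [Submodule.eq_top_iff']
      intro x
      rw [← Submodule.Quotient.mk_eq_zero]
      have h2 : (Submodule.Quotient.mk x : M.carrier ⧸ N) = e (e.symm (Submodule.Quotient.mk x)) :=
        (e.apply_symm_apply _).symm
      rw [h2, h (e.symm (Submodule.Quotient.mk x)), map_zero]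
    rw [htop] at hN
    exact filtgen_iso hN (Submodule.topEquiv)
  | step Q P hP hQgen IH =>
    intro M N e hN
    set P' : Submodule Aᵐᵒᵖ (M.carrier ⧸ N) := P.map e.toLinearMap with hP'
    set N' : Submodule Aᵐᵒᵖ M.carrier := P'.comap N.mkQ with hN'def
    have hNN' : N ≤ N' := by
      intro x hx
      show N.mkQ x ∈ P'
      have h0 : N.mkQ x = 0 := (Submodule.Quotient.mk_eq_zero N).mpr hx
      rw [h0]; exact P'.zero_mem
    have hmap : N'.map N.mkQ = P' :=
      Submodule.map_comap_eq_of_surjective (Submodule.mkQ_surjective N) P'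
    set φ : ↥N' →ₗ[Aᵐᵒᵖ] (M.carrier ⧸ N) := N.mkQ.comp N'.subtype with hφ
    have hkerφ : LinearMap.ker φ = N.comap N'.subtype := by
      ext x
      simp [hφ, LinearMap.mem_ker, Submodule.Quotient.mk_eq_zero]
    have hrangeφ : LinearMap.range φ = P' := by
      rw [hφ, LinearMap.range_comp, Submodule.range_subtype]
      exact hmap
    have hsubN' : FiltGen K A X (mkSub K A M N') := by
      refine IH (mkSub K A M N') (N.comap N'.subtype)
        ((e.submoduleMap P).trans ((LinearEquiv.ofEq _ _ hrangeφ.symm).trans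
          ((φ.quotKerEquivRange).symm.trans (Submodule.quotEquivOfEq _ _ hkerφ))))
        (filtgen_iso hN (Submodule.comapSubtypeEquivOfLe hNN').symm)
    refine FiltGen.step M N' hsubN' ?_
    have hle : P ≤ Submodule.comap e.toLinearMap (N'.map N.mkQ) := by
      intro x hx
      show e x ∈ N'.map N.mkQ
      rw [hmap]
      exact Submodule.mem_map_of_mem hx
    have hs : Function.Surjective (Submodule.mapQ P (N'.map N.mkQ) e.toLinearMap hle) := by
      intro y
      obtain ⟨y', rfl⟩ := Submodule.mkQ_surjective _ y
      obtain ⟨x, rfl⟩ := e.surjective y'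
      exact ⟨Submodule.Quotient.mk x, by rw [Submodule.mapQ_apply]; rfl⟩
    have hmid : GenBy X (mkQuot A (mkQuot A M N) (N'.map N.mkQ)) :=
      genBy_of_surjective hQgen (Submodule.mapQ P (N'.map N.mkQ) e.toLinearMap hle) hs
    exact genBy_of_surjective hmid
      (Submodule.quotientQuotientEquivQuotient N N' hNN').toLinearMap
      (LinearEquiv.surjective _)

theorem mkProd_mem {T0 : Set (FDMod Aᵐᵒᵖ)} (hT0 : IsTorsionClass Aᵐᵒᵖ T0)
    {M N : FDMod Aᵐᵒᵖ} (hM : M ∈ T0) (hN : N ∈ T0) : mkProd A M N ∈ T0 := by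
  refine hT0.ext_closed M (mkProd A M N) N hM hN trivial
    ⟨LinearMap.inl Aᵐᵒᵖ _ _, LinearMap.snd Aᵐᵒᵖ _ _, LinearMap.inl_injective, ?_,
      LinearMap.range_inl Aᵐᵒᵖ _ _⟩
  exact fun n => ⟨(0, n), rfl⟩

theorem mkPi_mem {T0 : Set (FDMod Aᵐᵒᵖ)} (hT0 : IsTorsionClass Aᵐᵒᵖ T0) :
    ∀ (n : ℕ) (F : Fin n → FDMod Aᵐᵒᵖ), (∀ i, F i ∈ T0) → mkPi A n F ∈ T0 := by
  intro n
  induction n with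
  | zero =>
    intro F _
    exact hT0.zero_mem _ trivial (fun z => funext fun i => i.elim0)
  | succ n IH =>
    intro F hF
    set φfam : Fin (n + 1) → Type u := fun i => (F i).carrier with hφfam
    set fsing : (F 0).carrier →ₗ[Aᵐᵒᵖ] ((i : Fin (n + 1)) → φfam i) :=
      LinearMap.single Aᵐᵒᵖ φfam 0 with hfsing
    set gtail : ((i : Fin (n + 1)) → φfam i) →ₗ[Aᵐᵒᵖ] ((i : Fin n) → φfam i.succ) :=
      LinearMap.pi (fun i : Fin n => LinearMap.proj i.succ) with hgtail
    have hinj : Function.Injective fsing := by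
      intro x y hxy
      have h0 := congrFun hxy 0
      rw [hfsing] at h0
      simpa using h0
    have hsurj : Function.Surjective gtail := by
      intro w
      refine ⟨Fin.cons (α := φfam) 0 w, funext fun i => ?_⟩
      rw [hgtail, LinearMap.pi_apply, LinearMap.proj_apply]
      exact Fin.cons_succ (α := φfam) 0 w i
    have hexact : LinearMap.range fsing = LinearMap.ker gtail := by
      apply Submodule.ext
      intro v
      simp only [LinearMap.mem_range, LinearMap.mem_ker]
      constructor
      · rintro ⟨x, rfl⟩
        refine funext fun i => ?_
        rw [hgtail, LinearMap.pi_apply, LinearMap.proj_apply, hfsing]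
        exact Pi.single_eq_of_ne (M := φfam) (Fin.succ_ne_zero i) x
      · intro hker
        have hk : ∀ i : Fin n, v i.succ = 0 := by
          intro i
          have := congrFun hker i
          rwa [hgtail, LinearMap.pi_apply, LinearMap.proj_apply] at this
        refine ⟨v 0, funext fun j => ?_⟩
        rw [hfsing]
        refine Fin.cases ?_ (fun i => ?_) j
        · exact Pi.single_eq_same (M := φfam) 0 (v 0)
        · rw [show v i.succ = (0 : φfam i.succ) from hk i]
          exact Pi.single_eq_of_ne (M := φfam) (Fin.succ_ne_zero i) (v 0)
    exact hT0.ext_closed (F 0) (mkPi A (n + 1) F) (mkPi A n (fun i => F i.succ)) (hF 0)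
      (IH _ (fun i => hF i.succ)) trivial ⟨fsing, gtail, hinj, hsurj, hexact⟩

theorem mkSub_bot_mem {T0 : Set (FDMod Aᵐᵒᵖ)} (hT0 : IsTorsionClass Aᵐᵒᵖ T0)
    (M : FDMod Aᵐᵒᵖ) : mkSub K A M ⊥ ∈ T0 :=
  hT0.zero_mem _ trivial (fun z => Subtype.ext ((Submodule.mem_bot _).mp z.2))

theorem mkSub_sup_mem {T0 : Set (FDMod Aᵐᵒᵖ)} (hT0 : IsTorsionClass Aᵐᵒᵖ T0)
    (M : FDMod Aᵐᵒᵖ) {P Q : Submodule Aᵐᵒᵖ M.carrier}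
    (hP : mkSub K A M P ∈ T0) (hQ : mkSub K A M Q ∈ T0) : mkSub K A M (P ⊔ Q) ∈ T0 := by
  refine hT0.quot_closed (mkProd A (mkSub K A M P) (mkSub K A M Q)) _
    (mkProd_mem hT0 hP hQ) trivial ⟨?_, ?_⟩
  · exact LinearMap.codRestrict (P ⊔ Q) ((P.subtype).coprod (Q.subtype))
      (fun x => add_mem (Submodule.mem_sup_left x.1.2) (Submodule.mem_sup_right x.2.2))
  · intro y
    obtain ⟨a, ha, b, hb, hab⟩ := Submodule.mem_sup.mp y.2
    exact ⟨(⟨a, ha⟩, ⟨b, hb⟩), Subtype.ext hab⟩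

theorem mkSub_iSup_mem {T0 : Set (FDMod Aᵐᵒᵖ)} (hT0 : IsTorsionClass Aᵐᵒᵖ T0)
    (M : FDMod Aᵐᵒᵖ) {n : ℕ} (P : Fin n → Submodule Aᵐᵒᵖ M.carrier)
    (h : ∀ i, mkSub K A M (P i) ∈ T0) : mkSub K A M (⨆ i, P i) ∈ T0 := by
  classical
  have hfin : ∀ s : Finset (Fin n), mkSub K A M (s.sup P) ∈ T0 := by
    intro s
    induction s using Finset.induction_on with
    | empty => simpa using mkSub_bot_mem hT0 M
    | @insert a s hx IH =>
      rw [Finset.sup_insert]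
      exact mkSub_sup_mem hT0 M (h _) IH
  have heq : (⨆ i, P i) = Finset.univ.sup P := by
    rw [Finset.sup_eq_iSup]
    simp
  rw [heq]
  exact hfin _

theorem filtgen_isTorsionClass (X : Set (FDMod Aᵐᵒᵖ)) :
    IsTorsionClass Aᵐᵒᵖ {M | FiltGen K A X M} where
  subset := Set.subset_univ _
  zero_mem := fun Z _ hz => FiltGen.zero Z hz
  iso_closed := fun M N hM _ h => filtgen_iso hM h.some
  quot_closed := fun M N hM _ h => filtgen_quot hM N h.choose h.choose_spec
  ext_closed := by
    rintro L M N hL hN _ ⟨f, g, hfi, hgs, he⟩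
    refine filtgen_of_quot hN M (LinearMap.ker g) (g.quotKerEquivOfSurjective hgs).symm ?_
    have h1 : FiltGen K A X (mkSub K A M (LinearMap.range f)) :=
      filtgen_iso hL (LinearEquiv.ofInjective f hfi)
    rwa [he] at h1

theorem filtgen_subset {X T0 : Set (FDMod Aᵐᵒᵖ)} (hT0 : IsTorsionClass Aᵐᵒᵖ T0)
    (hX : X ⊆ T0) {M : FDMod Aᵐᵒᵖ} (hM : FiltGen K A X M) : M ∈ T0 := by
  induction hM with
  | zero M h => exact hT0.zero_mem M trivial h
  | step M N hsub hgen IH =>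
    have hQ : mkQuot A M N ∈ T0 := by
      obtain ⟨n, F, hF, f, hf⟩ := hgen
      exact hT0.quot_closed (mkPi A n F) _ (mkPi_mem hT0 n F (fun i => hX (hF i)))
        trivial ⟨f, hf⟩
    exact hT0.ext_closed (mkSub K A M N) M (mkQuot A M N) IH hQ trivial
      ⟨N.subtype, N.mkQ, Submodule.injective_subtype N, Submodule.mkQ_surjective N,
        by exact (Submodule.range_subtype N).trans (Submodule.ker_mkQ N).symm⟩

theorem tclosure_eq_filtgen (X : Set (FDMod Aᵐᵒᵖ)) :
    tclosure Aᵐᵒᵖ X = {M | FiltGen K A X M} := by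
  apply le_antisymm
  · exact tclosure_min (filtgen_isTorsionClass X) (fun M hM => filtgen_of_mem hM)
  · exact fun M hM T0 hT0 hXT0 => filtgen_subset hT0 hXT0 hM

variable (K A)

noncomputable def fdim (M : FDMod Aᵐᵒᵖ) : ℕ := dimK K A M.carrier

variable {K A}

include K in
theorem exists_brick {U V : Set (FDMod Aᵐᵒᵖ)} (hU : IsTorsionClass Aᵐᵒᵖ U)
    (hV : IsTorsionClass Aᵐᵒᵖ V) {M₀ : FDMod Aᵐᵒᵖ} (hM₀V : M₀ ∈ V) (hM₀U : M₀ ∉ U) :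
    ∃ B : FDMod Aᵐᵒᵖ, IsBrick Aᵐᵒᵖ B ∧ B ∈ V ∧ B ∉ U ∧
      ∀ X ∈ U, ∀ f : X.carrier →ₗ[Aᵐᵒᵖ] B.carrier, f = 0 := by
  classical
  set S : Set ℕ := {n | ∃ M : FDMod Aᵐᵒᵖ, (M ∈ V ∧ M ∉ U) ∧ fdim K A M = n} with hSdef
  have hS : S.Nonempty := ⟨fdim K A M₀, M₀, ⟨hM₀V, hM₀U⟩, rfl⟩
  obtain ⟨B, ⟨hBV, hBU⟩, hBdim⟩ : ∃ M : FDMod Aᵐᵒᵖ, (M ∈ V ∧ M ∉ U) ∧ fdim K A M = sInf S :=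
    Nat.sInf_mem hS
  have hmin : ∀ M : FDMod Aᵐᵒᵖ, M ∈ V → M ∉ U → sInf S ≤ fdim K A M :=
    fun M h1 h2 => Nat.sInf_le ⟨M, ⟨h1, h2⟩, rfl⟩
  have hhom : ∀ X ∈ U, ∀ f : X.carrier →ₗ[Aᵐᵒᵖ] B.carrier, f = 0 := by
    intro X hX f
    by_contra hf
    obtain ⟨x, hx⟩ : ∃ x, f x ≠ 0 := by
      by_contra h
      push_neg at h
      exact hf (LinearMap.ext fun x => h x)
    set Nr := LinearMap.range f with hNr
    have hNrU : mkSub K A B Nr ∈ U :=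
      hU.quot_closed X _ hX trivial ⟨f.rangeRestrict, f.surjective_rangeRestrict⟩
    have hQV : mkQuot A B Nr ∈ V :=
      hV.quot_closed B _ hBV trivial ⟨Nr.mkQ, Submodule.mkQ_surjective Nr⟩
    have hQU : mkQuot A B Nr ∉ U := by
      intro hQ
      apply hBU
      exact hU.ext_closed (mkSub K A B Nr) B (mkQuot A B Nr) hNrU hQ trivial
        ⟨Nr.subtype, Nr.mkQ, Submodule.injective_subtype Nr, Submodule.mkQ_surjective Nr,
          by exact (Submodule.range_subtype Nr).trans (Submodule.ker_mkQ Nr).symm⟩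
    have hlt : fdim K A (mkQuot A B Nr) < fdim K A B := by
      refine dimK_lt_of_surjective Nr.mkQ (Submodule.mkQ_surjective Nr) (x := f x) hx ?_
      exact (Submodule.Quotient.mk_eq_zero Nr).mpr (LinearMap.mem_range_self f x)
    have := hmin _ hQV hQU
    omega
  have hnt : Nontrivial B.carrier := by
    by_contra h
    have hsub : Subsingleton B.carrier := not_nontrivial_iff_subsingleton.mp h
    exact hBU (hU.zero_mem B trivial (fun z => Subsingleton.elim z 0))
  refine ⟨B, ⟨hnt, ?_⟩, hBV, hBU, hhom⟩
  intro f hf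
  rw [Module.End.isUnit_iff]
  by_cases hinj : Function.Injective f
  · exact ⟨hinj, surjective_of_injective_dimK_ge (K := K) f hinj le_rfl⟩
  · exfalso
    obtain ⟨x, hfx, hx0⟩ : ∃ x, f x = 0 ∧ x ≠ 0 := by
      by_contra h
      push_neg at h
      refine hinj ((injective_iff_map_eq_zero f).mpr (fun a ha => ?_))
      by_contra ha0
      exact ha0 (h a ha)
    set Nr := LinearMap.range f with hNr
    have hNrV : mkSub K A B Nr ∈ V :=
      hV.quot_closed B _ hBV trivial ⟨f.rangeRestrict, f.surjective_rangeRestrict⟩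
    have hlt : fdim K A (mkSub K A B Nr) < fdim K A B := by
      refine dimK_lt_of_surjective f.rangeRestrict f.surjective_rangeRestrict (x := x) hx0 ?_
      exact Subtype.ext hfx
    by_cases hNrU : mkSub K A B Nr ∈ U
    · obtain ⟨y, hy⟩ : ∃ y, f y ≠ 0 := by
        by_contra h
        push_neg at h
        exact hf (LinearMap.ext fun y => h y)
      have hz := hhom _ hNrU Nr.subtype
      have : Nr.subtype ⟨f y, LinearMap.mem_range_self f y⟩ = 0 := by rw [hz]; rfl
      exact hy (by simpa using this)
    · have := hmin _ hNrV hNrU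
      omega

include K in
theorem part2 {C : Set (Set (FDMod Aᵐᵒᵖ))}
    (hC : ∀ T ∈ C, IsTorsionClass Aᵐᵒᵖ T) (hchain : IsChain (· ⊆ ·) C)
    (hmax : ∀ C' : Set (Set (FDMod Aᵐᵒᵖ)),
        (∀ T ∈ C', IsTorsionClass Aᵐᵒᵖ T) → IsChain (· ⊆ ·) C' → C ⊆ C' → C' = C)
    {T : Set (FDMod Aᵐᵒᵖ)} (hT : T ∈ C) :
    T = tclosure Aᵐᵒᵖ
        {B : FDMod Aᵐᵒᵖ | IsBrick Aᵐᵒᵖ B ∧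
          ∃ U ∈ C, ∃ V ∈ C, V ⊆ T ∧ U ⊂ V ∧
            (∀ W ∈ C, ¬ (U ⊂ W ∧ W ⊂ V)) ∧
            B ∈ V ∧ ∀ X ∈ U, ∀ f : X.carrier →ₗ[Aᵐᵒᵖ] B.carrier, f = 0} := by
  classical
  set BS : Set (FDMod Aᵐᵒᵖ) := {B : FDMod Aᵐᵒᵖ | IsBrick Aᵐᵒᵖ B ∧
          ∃ U ∈ C, ∃ V ∈ C, V ⊆ T ∧ U ⊂ V ∧
            (∀ W ∈ C, ¬ (U ⊂ W ∧ W ⊂ V)) ∧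
            B ∈ V ∧ ∀ X ∈ U, ∀ f : X.carrier →ₗ[Aᵐᵒᵖ] B.carrier, f = 0} with hBSdef
  set S2 := tclosure Aᵐᵒᵖ BS with hS2def
  have hS2tc : IsTorsionClass Aᵐᵒᵖ S2 := tclosure_isTorsionClass _
  have hBSsubT : BS ⊆ T := by
    rintro B ⟨_, U, hU, V, hV, hVT, _, _, hBV, _⟩
    exact hVT hBV
  refine le_antisymm ?_ (tclosure_min (hC T hT) hBSsubT)
  suffices H : ∀ (n : ℕ) (M : FDMod Aᵐᵒᵖ), M ∈ T → fdim K A M ≤ n → M ∈ S2 by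
    intro M hM
    exact H (fdim K A M) M hM le_rfl
  intro n
  induction n with
  | zero =>
    intro M hM hd
    exact hS2tc.zero_mem M trivial (dimK_eq_zero_iff.mp (Nat.le_zero.mp hd))
  | succ n IH =>
    intro M hM hd
    by_cases hz : ∀ z : M.carrier, z = 0
    · exact hS2tc.zero_mem M trivial hz
    have hMZ : M ∉ zclass Aᵐᵒᵖ := fun h => hz h
    obtain ⟨Y, Y', hY, hY', hYY', hMY, hMY', _, hY'T, hbelow, hcov⟩ :=
      chain_split hC hchain hmax (zclass_mem hC hchain hmax) hMZ hT hM
    obtain ⟨B', hB'brick, hB'V, hB'U, hB'hom⟩ :=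
      exists_brick (K := K) (hC Y hY) (hC Y' hY') hMY' hMY
    have hB'BS : B' ∈ BS := by
      rw [hBSdef]
      exact ⟨hB'brick, Y, hY, Y', hY', hY'T, ⟨hYY', fun h => hMY (h hMY')⟩,
        hcov, hB'V, hB'hom⟩
    have hB'S2 : B' ∈ S2 := subset_tclosure _ hB'BS
    have hY'eq : Y' = tclosure Aᵐᵒᵖ (insert B' Y) :=
      top_eq_tclosure_insert hC hchain hmax hY hY' hYY' hcov hB'U hB'V
    have hY'filt : Y' = {Mx : FDMod Aᵐᵒᵖ | FiltGen K A (insert B' Y) Mx} :=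
      hY'eq.trans (tclosure_eq_filtgen _)
    have hYT : Y ⊆ T := hYY'.trans hY'T
    -- inner induction over the filtration
    have inner : ∀ M'' : FDMod Aᵐᵒᵖ, FiltGen K A (insert B' Y) M'' →
        Nonempty (M''.carrier ≃ₗ[Aᵐᵒᵖ] M.carrier) → M'' ∈ S2 := by
      intro M'' hfilt
      induction hfilt with
      | zero Mx h =>
        intro _
        exact hS2tc.zero_mem _ trivial h
      | step Mx N hsub hgen IHin =>
        rintro ⟨e⟩
        haveI : Module.Finite Aᵐᵒᵖ ↥N := (mkSub K A Mx N).isFinite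
        have hdMx : fdim K A Mx = fdim K A M :=
          le_antisymm (dimK_le_of_injective e.toLinearMap e.injective)
            (dimK_le_of_injective e.symm.toLinearMap e.symm.injective)
        have hdMx' : fdim K A Mx ≤ n + 1 := by omega
        have hMxY : Mx ∉ Y := by
          intro hmem
          exact hMY ((hC Y hY).iso_closed Mx M hmem trivial ⟨e⟩)
        have hsubY' : mkSub K A Mx N ∈ Y' := by
          rw [hY'filt]
          exact hsub
        have hsubT : mkSub K A Mx N ∈ T := hY'T hsubY'
        have hsubinj : Function.Injective (N.subtype :
            (mkSub K A Mx N).carrier →ₗ[Aᵐᵒᵖ] Mx.carrier) := Submodule.injective_subtype N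
        have hsuble : fdim K A (mkSub K A Mx N) ≤ fdim K A Mx :=
          dimK_le_of_injective (N.subtype : (mkSub K A Mx N).carrier →ₗ[Aᵐᵒᵖ] Mx.carrier)
            hsubinj
        have hexact0 : LinearMap.range (N.subtype :
              (mkSub K A Mx N).carrier →ₗ[Aᵐᵒᵖ] Mx.carrier) =
            LinearMap.ker (N.mkQ : Mx.carrier →ₗ[Aᵐᵒᵖ] (mkQuot A Mx N).carrier) := by
          rw [Submodule.range_subtype, Submodule.ker_mkQ]
        have hdsum : fdim K A (mkSub K A Mx N) + fdim K A (mkQuot A Mx N) = fdim K A Mx :=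
          dimK_exact (N.subtype : (mkSub K A Mx N).carrier →ₗ[Aᵐᵒᵖ] Mx.carrier)
            (N.mkQ : Mx.carrier →ₗ[Aᵐᵒᵖ] (mkQuot A Mx N).carrier)
            hsubinj (Submodule.mkQ_surjective N) hexact0
        by_cases hNsmall : fdim K A (mkSub K A Mx N) ≤ n
        · -- submodule handled by the outer induction hypothesis
          have hNS2 : mkSub K A Mx N ∈ S2 := IH _ hsubT hNsmall
          -- quotient handled piecewise
          have hquot : mkQuot A Mx N ∈ S2 := by
            obtain ⟨m, F, hF, fq, hfq⟩ := hgen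
            set Pp : Fin m → Submodule Aᵐᵒᵖ (mkQuot A Mx N).carrier :=
              fun i => LinearMap.range (fq ∘ₗ
                LinearMap.single Aᵐᵒᵖ (fun j => (F j).carrier) i) with hPp
            have hsup : (⨆ i, Pp i) = ⊤ := by
              rw [Submodule.eq_top_iff']
              intro q
              obtain ⟨v, rfl⟩ := hfq q
              have hv : v = ∑ i : Fin m, Pi.single i (v i) := by
                exact (Finset.univ_sum_single v).symm
              rw [hv, map_sum]
              refine Submodule.sum_mem _ (fun i _ => ?_)
              refine Submodule.mem_iSup_of_mem i ?_
              exact ⟨v i, rfl⟩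
            have hpiece : ∀ i, mkSub K A (mkQuot A Mx N) (Pp i) ∈ S2 := by
              intro i
              have hsurj : Function.Surjective ((fq ∘ₗ
                  LinearMap.single Aᵐᵒᵖ (fun j => (F j).carrier) i).rangeRestrict) :=
                LinearMap.surjective_rangeRestrict _
              rcases hF i with hFi | hFi
              · -- F i = B'
                refine hS2tc.quot_closed (F i) _ ?_ trivial
                  ⟨(fq ∘ₗ LinearMap.single Aᵐᵒᵖ (fun j => (F j).carrier) i).rangeRestrict,
                    hsurj⟩
                rw [hFi]
                exact hB'S2
              · -- F i ∈ Y
                have hpY : mkSub K A (mkQuot A Mx N) (Pp i) ∈ Y :=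
                  (hC Y hY).quot_closed (F i) _ hFi trivial
                    ⟨(fq ∘ₗ LinearMap.single Aᵐᵒᵖ (fun j => (F j).carrier) i).rangeRestrict,
                      hsurj⟩
                have hpT : mkSub K A (mkQuot A Mx N) (Pp i) ∈ T := hYT hpY
                have hpinj : Function.Injective ((Pp i).subtype :
                    (mkSub K A (mkQuot A Mx N) (Pp i)).carrier →ₗ[Aᵐᵒᵖ]
                      (mkQuot A Mx N).carrier) := Submodule.injective_subtype _
                have hple : fdim K A (mkSub K A (mkQuot A Mx N) (Pp i)) ≤
                    fdim K A (mkQuot A Mx N) := dimK_le_of_injective _ hpinj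
                haveI : Module.Finite Aᵐᵒᵖ ↥(Pp i) :=
                  (mkSub K A (mkQuot A Mx N) (Pp i)).isFinite
                by_cases hpsmall : fdim K A (mkSub K A (mkQuot A Mx N) (Pp i)) ≤ n
                · exact IH _ hpT hpsmall
                · -- degenerate: everything has dimension n+1, M lands in Y
                  exfalso
                  have h1 : fdim K A (mkSub K A (mkQuot A Mx N) (Pp i)) = n + 1 := by omega
                  have h2 : fdim K A (mkQuot A Mx N) = n + 1 := by omega
                  have h3 : fdim K A (mkSub K A Mx N) = 0 := by omega
                  have hNbot : N = ⊥ := by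
                    rw [eq_bot_iff]
                    intro x hx
                    have hzz := dimK_eq_zero_iff.mp h3 ⟨x, hx⟩
                    rw [Submodule.mem_bot]
                    exact congrArg Subtype.val hzz
                  have hpsurj : Function.Surjective ((Pp i).subtype :
                      (mkSub K A (mkQuot A Mx N) (Pp i)).carrier →ₗ[Aᵐᵒᵖ]
                        (mkQuot A Mx N).carrier) :=
                    surjective_of_injective_dimK_ge (K := K)
                      ((Pp i).subtype : (mkSub K A (mkQuot A Mx N) (Pp i)).carrier →ₗ[Aᵐᵒᵖ]
                        (mkQuot A Mx N).carrier) hpinj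
                      (le_of_eq (by
                        show fdim K A (mkQuot A Mx N) =
                          fdim K A (mkSub K A (mkQuot A Mx N) (Pp i))
                        omega))
                  have epi : (mkSub K A (mkQuot A Mx N) (Pp i)).carrier ≃ₗ[Aᵐᵒᵖ]
                      (mkQuot A Mx N).carrier :=
                    LinearEquiv.ofBijective _ ⟨hpinj, hpsurj⟩
                  have eq2 : (mkQuot A Mx N).carrier ≃ₗ[Aᵐᵒᵖ] Mx.carrier :=
                    N.quotEquivOfEqBot hNbot
                  have : M ∈ Y :=
                    (hC Y hY).iso_closed (mkSub K A (mkQuot A Mx N) (Pp i)) M hpY trivial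
                      ⟨(epi.trans eq2).trans e⟩
                  exact hMY this
            have hsupmem : mkSub K A (mkQuot A Mx N) (⨆ i, Pp i) ∈ S2 :=
              mkSub_iSup_mem hS2tc _ Pp hpiece
            rw [hsup] at hsupmem
            exact hS2tc.iso_closed _ _ hsupmem trivial ⟨Submodule.topEquiv⟩
          exact hS2tc.ext_closed (mkSub K A Mx N) Mx (mkQuot A Mx N) hNS2 hquot trivial
            ⟨N.subtype, N.mkQ, hsubinj, Submodule.mkQ_surjective N, hexact0⟩
        · -- the submodule is everything
          have hsurj : Function.Surjective (N.subtype :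
              (mkSub K A Mx N).carrier →ₗ[Aᵐᵒᵖ] Mx.carrier) :=
            surjective_of_injective_dimK_ge (K := K)
              (N.subtype : (mkSub K A Mx N).carrier →ₗ[Aᵐᵒᵖ] Mx.carrier) hsubinj
              (le_of_eq (by
                show fdim K A Mx = fdim K A (mkSub K A Mx N)
                omega))
          have esub : (mkSub K A Mx N).carrier ≃ₗ[Aᵐᵒᵖ] Mx.carrier :=
            LinearEquiv.ofBijective _ ⟨hsubinj, hsurj⟩
          have hsubS2 : mkSub K A Mx N ∈ S2 := IHin ⟨esub.trans e⟩
          exact hS2tc.iso_closed _ _ hsubS2 trivial ⟨esub⟩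
    have hMfilt : FiltGen K A (insert B' Y) M := by
      rw [hY'filt] at hMY'
      exact hMY'
    exact inner M hMfilt ⟨LinearEquiv.refl Aᵐᵒᵖ M.carrier⟩


end Filt

/-- Demonet, Prop. A.2: if `C` is a maximal chain of torsion
classes, then every `T ∈ C` is the smallest torsion class containing the
union of the completely join irreducible elements of `C` contained in `T`;
it also equals the smallest torsion class containing the bricks labelling
the covering relations `U ⋖ V` of `C` with `V ⊆ T` (the bricks
`B ∈ U^⊥ ∩ V`). -/
theorem maximal_chain_generated_by_cjirr_and_bricks (K A : Type u) [Field K]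
    [Ring A] [Algebra K A] [FiniteDimensional K A]
    (C : Set (Set (FDMod Aᵐᵒᵖ)))
    (hC : ∀ T ∈ C, IsTorsionClass Aᵐᵒᵖ T) (hchain : IsChain (· ⊆ ·) C)
    (hmax : ∀ C' : Set (Set (FDMod Aᵐᵒᵖ)),
        (∀ T ∈ C', IsTorsionClass Aᵐᵒᵖ T) → IsChain (· ⊆ ·) C' →
        C ⊆ C' → C' = C)
    (T : Set (FDMod Aᵐᵒᵖ)) (hT : T ∈ C) :
    T = tclosure Aᵐᵒᵖ (⋃₀ {U | U ∈ C ∧ IsCJIinChain C U ∧ U ⊆ T}) ∧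
    T = tclosure Aᵐᵒᵖ
        {B : FDMod Aᵐᵒᵖ | IsBrick Aᵐᵒᵖ B ∧
          ∃ U ∈ C, ∃ V ∈ C, V ⊆ T ∧ U ⊂ V ∧
            (∀ W ∈ C, ¬ (U ⊂ W ∧ W ⊂ V)) ∧
            B ∈ V ∧ ∀ X ∈ U, ∀ f : X.carrier →ₗ[Aᵐᵒᵖ] B.carrier, f = 0} := by
  exact ⟨part1 hC hchain hmax hT, part2 (K := K) hC hchain hmax hT⟩
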